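/- arXiv:1403.6312 — 6 statements merged into one kernel-verified Lean document; each statement's English description precedes it below -/
import Mathlib

section
/- Let Φ : H → ℝ ∪ {+∞} be proper, convex, lower semicontinuous and B : H → H be β-cocoercive. If z₁ and z₂ both satisfy 0 ∈ ∂Φ(z) + Bz, then Bz₁ = Bz₂; i.e., B is constant on the solution set S = {z : 0 ∈ ∂Φ(z) + Bz}. -/
open scoped RealInnerProductSpace

/-- `v` belongs to the convex subdifferential of `Φ` at `x`. -/
def InSubdiff {H : Type*} [NormedAddCommGroup H] [InnerProductSpace ℝ H]
    (Φ : H → EReal) (x v : H) : Prop :=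
  ∀ y : H, Φ x + ((⟪v, y - x⟫ : ℝ) : EReal) ≤ Φ y

/-- `B` is constant on the solution set `S = {z : 0 ∈ ∂Φ(z) + Bz}`. -/
theorem B_const_on_solution_set
    {H : Type*} [NormedAddCommGroup H] [InnerProductSpace ℝ H]
    (Φ : H → EReal)
    (hproper : (∀ x, Φ x ≠ ⊥) ∧ ∃ x, Φ x ≠ ⊤)
    (hconvex : ∀ x y : H, ∀ a b : ℝ, 0 ≤ a → 0 ≤ b → a + b = 1 →
      Φ (a • x + b • y) ≤ (a : EReal) * Φ x + (b : EReal) * Φ y)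
    (hlsc : LowerSemicontinuous Φ)
    (β : ℝ) (hβ : 0 < β) (B : H → H)
    (hcoco : ∀ x y : H, β * ‖B x - B y‖ ^ 2 ≤ ⟪B x - B y, x - y⟫)
    (z₁ z₂ : H) (hz₁ : InSubdiff Φ z₁ (-B z₁)) (hz₂ : InSubdiff Φ z₂ (-B z₂)) :
    B z₁ = B z₂ := by
  -- finiteness of Φ z₁ and Φ z₂
  have hfin : ∀ z : H, InSubdiff Φ z (-B z) → Φ z ≠ ⊤ := by
    intro z hz htop
    obtain ⟨x, hx⟩ := hproper.2
    have := hz x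
    rw [htop] at this
    have : (⊤ : EReal) ≤ Φ x := by
      simpa [EReal.top_add_of_ne_bot (by simp : ((⟪-B z, x - z⟫ : ℝ) : EReal) ≠ ⊥)] using this
    exact hx (top_le_iff.mp this)
  have h1t := hfin z₁ hz₁
  have h2t := hfin z₂ hz₂
  have h1b := hproper.1 z₁
  have h2b := hproper.1 z₂
  set a := (Φ z₁).toReal
  set b := (Φ z₂).toReal
  have ha : Φ z₁ = (a : EReal) := (EReal.coe_toReal h1t h1b).symm
  have hb : Φ z₂ = (b : EReal) := (EReal.coe_toReal h2t h2b).symm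
  have e1 : a + ⟪-B z₁, z₂ - z₁⟫ ≤ b := by
    have := hz₁ z₂
    rw [ha, hb, ← EReal.coe_add] at this
    exact_mod_cast this
  have e2 : b + ⟪-B z₂, z₁ - z₂⟫ ≤ a := by
    have := hz₂ z₁
    rw [ha, hb, ← EReal.coe_add] at this
    exact_mod_cast this
  have hsum : ⟪-B z₁, z₂ - z₁⟫ + ⟪-B z₂, z₁ - z₂⟫ ≤ 0 := by linarith
  have hkey : ⟪B z₁ - B z₂, z₁ - z₂⟫ ≤ 0 := by
    have heq : ⟪B z₁ - B z₂, z₁ - z₂⟫ = ⟪-B z₁, z₂ - z₁⟫ + ⟪-B z₂, z₁ - z₂⟫ := by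
      simp [inner_sub_left, inner_sub_right, inner_neg_left]
      ring
    linarith [heq]
  have := hcoco z₁ z₂
  have hn : ‖B z₁ - B z₂‖ ^ 2 ≤ 0 := by nlinarith
  have : ‖B z₁ - B z₂‖ = 0 := by nlinarith [norm_nonneg (B z₁ - B z₂)]
  exact sub_eq_zero.mp (norm_eq_zero.mp this)
end

section
/- Suppose 1 ≤ p < ∞, 1 ≤ r ≤ ∞, F ∈ L^p([0,∞)) is a locally absolutely continuous nonnegative function, G ∈ L^r([0,∞)), and (d/dt)F(t) ≤ G(t) for almost all t. Then F(t) → 0 as t → ∞. -/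
open MeasureTheory Filter
open scoped ENNReal

/-- A real function is locally absolutely continuous on `[0, ∞)` with a.e.
derivative `F'` if it is the integral of `F'` on nonnegative intervals. -/
def IsLocACReal (F F' : ℝ → ℝ) : Prop :=
  (∀ a b : ℝ, 0 ≤ a → 0 ≤ b → IntegrableOn F' (Set.uIcc a b)) ∧
    ∀ s t : ℝ, 0 ≤ s → 0 ≤ t → F t - F s = ∫ u in s..t, F' u

/-!
Since `G ∈ L^r` with `r ≥ 1`, the integral of `|G|` over intervals of length `δ` is uniformly
small, and `F' ≤ G` then keeps `F` from dropping quickly: if `F t ≥ ε`, then `F ≥ ε / 2` on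
`[t - δ, t]`. Hence `∫ F ^ p ≥ (ε / 2) ^ p δ` over that interval, which is impossible for large
`t` because the tails of the convergent integral `∫ F ^ p` vanish.
-/

open Set Topology

namespace MeasureTheory

/-- For `r = ∞` the bound is `‖f‖_∞ μ s`; for `r < ∞`, Hölder's inequality on a set of measure
at most `1` reduces it to the smallness of `‖1_s f‖_r`. -/
theorem MemLp.exists_setIntegral_norm_le {α E : Type*} [MeasurableSpace α] [NormedAddCommGroup E]
    {μ : Measure α} {r : ℝ≥0∞} {f : α → E} (hr : 1 ≤ r) (hf : MemLp f r μ) {ε : ℝ}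
    (hε : 0 < ε) :
    ∃ δ > 0, ∀ s, MeasurableSet s → μ s ≤ ENNReal.ofReal δ → ∫ x in s, ‖f x‖ ∂μ ≤ ε := by
  suffices ∃ δ > 0, ∀ s, MeasurableSet s → μ s ≤ ENNReal.ofReal δ →
      eLpNorm f 1 (μ.restrict s) ≤ ENNReal.ofReal ε by
    obtain ⟨δ, hδ, hsmall⟩ := this
    refine ⟨δ, hδ, fun s hs hμs => ?_⟩
    rw [integral_norm_eq_lintegral_enorm hf.1.restrict, ← eLpNorm_one_eq_lintegral_enorm]
    exact ENNReal.toReal_le_of_le_ofReal hε.le (hsmall s hs hμs)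
  have holder : ∀ s, eLpNorm f 1 (μ.restrict s) ≤
      eLpNorm f r (μ.restrict s) * μ s ^ (1 - 1 / r.toReal) := fun s => by
    simpa using eLpNorm_le_eLpNorm_mul_rpow_measure_univ hr hf.1.restrict
  rcases eq_or_ne r ⊤ with rfl | hr_top
  · set C := (eLpNorm f ⊤ μ).toReal
    refine ⟨ε / (C + 1), by positivity, fun s hs hμs => ?_⟩
    calc eLpNorm f 1 (μ.restrict s) ≤ eLpNorm f ⊤ μ * μ s := by
          simpa using (holder s).trans
            (mul_le_mul_left (eLpNorm_mono_measure f Measure.restrict_le_self) _)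
      _ ≤ ENNReal.ofReal C * ENNReal.ofReal (ε / (C + 1)) := by
          rw [ENNReal.ofReal_toReal hf.2.ne]
          gcongr
      _ = ENNReal.ofReal (C * (ε / (C + 1))) := (ENNReal.ofReal_mul (by positivity)).symm
      _ ≤ ENNReal.ofReal ε := by
          refine ENNReal.ofReal_le_ofReal ?_
          rw [mul_div_assoc', div_le_iff₀ (by positivity)]
          nlinarith
  · obtain ⟨δ, hδ, hsmall⟩ := hf.eLpNorm_indicator_le hr hr_top hε
    refine ⟨min δ 1, by positivity, fun s hs hμs => ?_⟩
    have hr_inv : 1 / r.toReal ≤ 1 := by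
      have : 1 ≤ r.toReal := by simpa using ENNReal.toReal_mono hr_top hr
      rwa [div_le_one₀ (by positivity)]
    calc eLpNorm f 1 (μ.restrict s) ≤ eLpNorm f r (μ.restrict s) * μ s ^ (1 - 1 / r.toReal) :=
          holder s
      _ ≤ ENNReal.ofReal ε * 1 := by
          gcongr
          · rw [← eLpNorm_indicator_eq_eLpNorm_restrict hs]
            exact hsmall s hs (hμs.trans (ENNReal.ofReal_le_ofReal (min_le_left _ _)))
          · refine ENNReal.rpow_le_one ?_ (sub_nonneg.2 hr_inv)
            simpa using hμs.trans (ENNReal.ofReal_le_ofReal (min_le_right _ _))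
      _ = ENNReal.ofReal ε := mul_one _

theorem MemLp.eventually_exists_norm_lt_on_Icc {E : Type*} [NormedAddCommGroup E] {p : ℝ≥0∞}
    {F : ℝ → E} {a : ℝ} (hp_zero : p ≠ 0) (hp_top : p ≠ ⊤)
    (hF : MemLp F p (volume.restrict (Ici a))) {c δ : ℝ} (hc : 0 < c) (hδ : 0 < δ) :
    ∀ᶠ t in atTop, ∃ s ∈ Icc (t - δ) t, ‖F s‖ < c := by
  set H : ℝ → ℝ := fun x => ‖F x‖ ^ p.toReal
  have hH : IntegrableOn H (Ici a) := hF.integrable_norm_rpow hp_zero hp_top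
  have htail : Tendsto (fun T => ∫ x in Ici T, H x) atTop (𝓝 0) := by
    have hempty : ⋂ T : ℝ, Ici T = ∅ := iInter_eq_empty_iff.2 fun x => ⟨x + 1, by simp⟩
    simpa [hempty] using
      tendsto_setIntegral_of_antitone (fun _ => measurableSet_Ici) antitone_Ici ⟨a, hH⟩
  have hshift : Tendsto (fun t => t - δ) atTop atTop :=
    tendsto_atTop_add_const_right _ _ tendsto_id
  filter_upwards [hshift.eventually (htail.eventually (gt_mem_nhds (by positivity :
      0 < c ^ p.toReal * δ))), eventually_ge_atTop (a + δ)] with t htail_small hta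
  by_contra! hge
  have hlower : c ^ p.toReal * δ ≤ ∫ x in Icc (t - δ) t, H x :=
    calc c ^ p.toReal * δ = ∫ _ in Icc (t - δ) t, c ^ p.toReal := by
          simp [hδ.le, mul_comm]
      _ ≤ ∫ x in Icc (t - δ) t, H x :=
          setIntegral_mono_on (integrableOn_const measure_Icc_lt_top.ne)
            (hH.mono_set fun x hx => by simp only [mem_Ici] at *; linarith [hx.1])
            measurableSet_Icc fun x hx => Real.rpow_le_rpow hc.le (hge x hx) ENNReal.toReal_nonneg
  have hupper : ∫ x in Icc (t - δ) t, H x ≤ ∫ x in Ici (t - δ), H x :=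
    setIntegral_mono_set (hH.mono_set (Ici_subset_Ici.2 (by linarith)))
      (ae_of_all _ fun x => by positivity) Icc_subset_Ici_self.eventuallyLE
  linarith

end MeasureTheory

theorem IsLocACReal.sub_le_intervalIntegral {F F' G : ℝ → ℝ} (hF : IsLocACReal F F') {s t : ℝ}
    (hs : 0 ≤ s) (hst : s ≤ t) (hG : IntegrableOn G (Icc s t))
    (hFG : ∀ᵐ u ∂volume.restrict (Icc s t), F' u ≤ G u) :
    F t - F s ≤ ∫ u in s..t, G u := by
  rw [hF.2 s t hs (hs.trans hst)]
  refine intervalIntegral.integral_mono_ae_restrict hst ?_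
    ((intervalIntegrable_iff_integrableOn_Icc_of_le hst).2 hG) hFG
  exact intervalIntegrable_iff.2 ((hF.1 s t hs (hs.trans hst)).mono_set uIoc_subset_uIcc)

theorem IsLocACReal.sub_le_setIntegral_norm {F F' G : ℝ → ℝ} {r : ℝ≥0∞} (hr : 1 ≤ r)
    (hF : IsLocACReal F F') (hG : MemLp G r (volume.restrict (Ici 0)))
    (hFG : ∀ᵐ u ∂volume.restrict (Ici 0), F' u ≤ G u) {s t : ℝ} (hs : 0 ≤ s) (hst : s ≤ t) :
    F t - F s ≤ ∫ u in Icc s t, ‖G u‖ ∂volume.restrict (Ici 0) := by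
  have hrestrict : (volume.restrict (Ici (0 : ℝ))).restrict (Icc s t) = volume.restrict (Icc s t) :=
    Measure.restrict_restrict_of_subset fun x hx => hs.trans hx.1
  have hGloc := hG.restrict (Icc s t)
  rw [hrestrict] at hGloc
  calc F t - F s ≤ ∫ u in s..t, G u :=
        hF.sub_le_intervalIntegral hs hst (hGloc.integrable hr)
          (hrestrict ▸ ae_restrict_of_ae hFG)
    _ = ∫ u in Icc s t, G u := by
        rw [intervalIntegral.integral_of_le hst, integral_Icc_eq_integral_Ioc]
    _ ≤ ∫ u in Icc s t, ‖G u‖ := (Real.le_norm_self _).trans (norm_integral_le_integral_norm _)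
    _ = ∫ u in Icc s t, ‖G u‖ ∂volume.restrict (Ici 0) := by rw [hrestrict]

/-- If `F ∈ L^p([0,∞))` is nonnegative and locally absolutely continuous,
`G ∈ L^r([0,∞))`, and `F' ≤ G` a.e., then `F(t) → 0` as `t → ∞`. -/
theorem tendsto_zero_of_memLp
    (p r : ℝ≥0∞) (hp : 1 ≤ p) (hp' : p ≠ ⊤) (hr : 1 ≤ r)
    (F F' G : ℝ → ℝ)
    (hFnonneg : ∀ t : ℝ, 0 ≤ t → 0 ≤ F t)
    (hFac : IsLocACReal F F')
    (hFLp : MemLp F p (volume.restrict (Set.Ici (0 : ℝ))))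
    (hGLr : MemLp G r (volume.restrict (Set.Ici (0 : ℝ))))
    (hFG : ∀ᵐ t ∂(volume.restrict (Set.Ici (0 : ℝ))), F' t ≤ G t) :
    Tendsto F atTop (nhds 0) := by
  refine tendsto_order.2
    ⟨fun a ha => eventually_atTop.2 ⟨0, fun t ht => ha.trans_le (hFnonneg t ht)⟩, fun ε hε => ?_⟩
  obtain ⟨δ, hδ, hGsmall⟩ := hGLr.exists_setIntegral_norm_le hr (half_pos hε)
  have hp_zero : p ≠ 0 := (zero_lt_one.trans_le hp).ne'
  filter_upwards [hFLp.eventually_exists_norm_lt_on_Icc hp_zero hp' (half_pos hε) hδ,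
    eventually_ge_atTop δ] with t ⟨s, hs, hFs⟩ htδ
  have hs0 : 0 ≤ s := by linarith [hs.1]
  have hμ : volume.restrict (Ici (0 : ℝ)) (Icc s t) ≤ ENNReal.ofReal δ := by
    refine (Measure.restrict_apply_le _ _).trans ?_
    rw [Real.volume_Icc]
    exact ENNReal.ofReal_le_ofReal (by linarith [hs.1])
  have hFt := hFac.sub_le_setIntegral_norm hr hGLr hFG hs0 hs.2
  rw [Real.norm_eq_abs] at hFs
  linarith [hGsmall _ measurableSet_Icc hμ, abs_lt.1 hFs]
end

section
/- (Opial's lemma, continuous form) Let S ⊆ H be nonempty and x : [0, ∞) → H. If (i) for every z ∈ S the limit lim_{t→∞} ‖x(t) − z‖ exists, and (ii) every weak sequential cluster point of x(t) as t → ∞ belongs to S, then x(t) converges weakly to some x_∞ ∈ S as t → ∞. -/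
/-!
A trajectory for which `‖x t - z‖` converges is bounded, and bounded sequences in a Hilbert space
have weakly convergent subsequences (sequential Banach–Alaoglu on the separable closed span of the
sequence). If `p, q ∈ S` are two weak sequential cluster points, the identity
`2 ⟪x, q - p⟫ = ‖x - p‖² - ‖x - q‖² + ‖q‖² - ‖p‖²` shows that `⟪x t, q - p⟫` converges; reading
its limit along the two sequences gives `⟪p, q - p⟫ = ⟪q, q - p⟫`, i.e. `p = q`. So every sequence
`t n → ∞` has a subsequence along which `x` converges weakly to the same point of `S`.
-/

open scoped RealInnerProductSpace
open Filter Topology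

section WeakClusterPoints

variable {H : Type*} [NormedAddCommGroup H] [InnerProductSpace ℝ H]

theorem exists_strictMono_tendsto_inner_of_norm_le [CompleteSpace H]
    {y : ℕ → H} {C : ℝ} (hy : ∀ n, ‖y n‖ ≤ C) :
    ∃ p : H, ∃ φ : ℕ → ℕ, StrictMono φ ∧
      ∀ v : H, Tendsto (fun n => ⟪y (φ n), v⟫) atTop (𝓝 ⟪p, v⟫) := by
  set K := (Submodule.span ℝ (Set.range y)).topologicalClosure
  have hyK (n : ℕ) : y n ∈ K :=
    Submodule.le_topologicalClosure _ (Submodule.subset_span (Set.mem_range_self n))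
  have : CompleteSpace K := (Submodule.isClosed_topologicalClosure _).completeSpace_coe
  have : TopologicalSpace.SeparableSpace K := by
    have hK : TopologicalSpace.IsSeparable (K : Set H) := by
      rw [Submodule.topologicalClosure_coe]
      exact (Set.countable_range y).isSeparable.span.closure
    exact hK.separableSpace
  let f (n : ℕ) : WeakDual ℝ K :=
    StrongDual.toWeakDual (InnerProductSpace.toDual ℝ K ⟨y n, hyK n⟩)
  have hf (n : ℕ) : f n ∈ WeakDual.toStrongDual ⁻¹' Metric.closedBall 0 C := by
    have hn : ‖InnerProductSpace.toDual ℝ K ⟨y n, hyK n⟩‖ ≤ C := by simpa using hy n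
    exact mem_closedBall_zero_iff.2 hn
  obtain ⟨g, -, φ, hφ, hg⟩ := WeakDual.isSeqCompact_closedBall ℝ K 0 C hf
  refine ⟨(InnerProductSpace.toDual ℝ K).symm (WeakDual.toStrongDual g), φ, hφ, fun v => ?_⟩
  have hgv := ((WeakDual.eval_continuous (K.orthogonalProjectionOnto v)).tendsto g).comp hg
  rw [← K.inner_orthogonalProjectionOnto_eq_of_mem_left, InnerProductSpace.toDual_symm_apply]
  simpa [f, Function.comp_def] using hgv

theorem exists_strictMono_tendsto_inner_of_eventually_norm_le [CompleteSpace H]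
    {y : ℕ → H} {C : ℝ} (hy : ∀ᶠ n in atTop, ‖y n‖ ≤ C) :
    ∃ p : H, ∃ φ : ℕ → ℕ, StrictMono φ ∧
      ∀ v : H, Tendsto (fun n => ⟪y (φ n), v⟫) atTop (𝓝 ⟪p, v⟫) := by
  obtain ⟨N, hN⟩ := eventually_atTop.1 hy
  obtain ⟨p, φ, hφ, hp⟩ := exists_strictMono_tendsto_inner_of_norm_le (y := fun n => y (n + N))
    fun n => hN _ (Nat.le_add_left N n)
  exact ⟨p, fun n => φ n + N, hφ.add_const N, hp⟩

def IsWeakSeqClusterPt {α : Type*} (x : α → H) (l : Filter α) (p : H) : Prop :=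
  ∃ t : ℕ → α, Tendsto t atTop l ∧ ∀ v : H, Tendsto (fun n => ⟪x (t n), v⟫) atTop (𝓝 ⟪p, v⟫)

variable {α : Type*} {x : α → H} {l : Filter α}

theorem exists_isWeakSeqClusterPt [CompleteSpace H] [l.NeBot] [l.IsCountablyGenerated] {C : ℝ}
    (hx : ∀ᶠ t in l, ‖x t‖ ≤ C) : ∃ p, IsWeakSeqClusterPt x l p := by
  obtain ⟨s, hs⟩ := exists_seq_tendsto l
  obtain ⟨p, φ, hφ, hp⟩ := exists_strictMono_tendsto_inner_of_eventually_norm_le (hs.eventually hx)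
  exact ⟨p, s ∘ φ, hs.comp hφ.tendsto_atTop, hp⟩

theorem tendsto_inner_of_forall_isWeakSeqClusterPt_eq [CompleteSpace H] [l.IsCountablyGenerated]
    {C : ℝ} (hx : ∀ᶠ t in l, ‖x t‖ ≤ C) {p : H} (hp : ∀ q, IsWeakSeqClusterPt x l q → q = p)
    (v : H) : Tendsto (fun t => ⟪x t, v⟫) l (𝓝 ⟪p, v⟫) := by
  refine tendsto_of_subseq_tendsto fun s hs => ?_
  obtain ⟨q, φ, hφ, hq⟩ := exists_strictMono_tendsto_inner_of_eventually_norm_le (hs.eventually hx)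
  obtain rfl := hp q ⟨s ∘ φ, hs.comp hφ.tendsto_atTop, hq⟩
  exact ⟨φ, hq v⟩

theorem two_mul_inner_sub_eq_norm_sub_sq (y p q : H) :
    2 * ⟪y, q - p⟫ = ‖y - p‖ ^ 2 - ‖y - q‖ ^ 2 + ‖q‖ ^ 2 - ‖p‖ ^ 2 := by
  rw [norm_sub_sq_real, norm_sub_sq_real, inner_sub_right]
  ring

theorem IsWeakSeqClusterPt.eq_of_tendsto_norm_sub {p q : H} {a b : ℝ}
    (hp : IsWeakSeqClusterPt x l p) (hq : IsWeakSeqClusterPt x l q)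
    (ha : Tendsto (fun t => ‖x t - p‖) l (𝓝 a)) (hb : Tendsto (fun t => ‖x t - q‖) l (𝓝 b)) :
    p = q := by
  obtain ⟨s, hs, hps⟩ := hp
  obtain ⟨u, hu, hqu⟩ := hq
  set L := (a ^ 2 - b ^ 2 + ‖q‖ ^ 2 - ‖p‖ ^ 2) / 2
  have hL : Tendsto (fun t => ⟪x t, q - p⟫) l (𝓝 L) := by
    have h := ((((ha.pow 2).sub (hb.pow 2)).add_const (‖q‖ ^ 2)).sub_const (‖p‖ ^ 2)).div_const 2
    refine h.congr fun t => ?_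
    linarith [two_mul_inner_sub_eq_norm_sub_sq (x t) p q]
  have hpL : ⟪p, q - p⟫ = L := tendsto_nhds_unique (hps (q - p)) (hL.comp hs)
  have hqL : ⟪q, q - p⟫ = L := tendsto_nhds_unique (hqu (q - p)) (hL.comp hu)
  have hself : ⟪q - p, q - p⟫ = 0 := by rw [inner_sub_left, hpL, hqL, sub_self]
  exact (sub_eq_zero.1 (inner_self_eq_zero.1 hself)).symm

end WeakClusterPoints

/-- Opial's lemma, continuous form. -/
theorem opial_continuous
    {H : Type*} [NormedAddCommGroup H] [InnerProductSpace ℝ H] [CompleteSpace H]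
    (S : Set H) (hS : S.Nonempty) (x : ℝ → H)
    (h1 : ∀ z ∈ S, ∃ l : ℝ, Tendsto (fun t => ‖x t - z‖) atTop (nhds l))
    (h2 : ∀ p : H, (∃ t : ℕ → ℝ, Tendsto t atTop atTop ∧
        ∀ v : H, Tendsto (fun n => ⟪x (t n), v⟫) atTop (nhds ⟪p, v⟫)) → p ∈ S) :
    ∃ xi ∈ S, ∀ v : H, Tendsto (fun t => ⟪x t, v⟫) atTop (nhds ⟪xi, v⟫) := by
  obtain ⟨z, hz⟩ := hS
  obtain ⟨a, ha⟩ := h1 z hz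
  have hbdd : ∀ᶠ t in atTop, ‖x t‖ ≤ a + 1 + ‖z‖ :=
    (ha.eventually (eventually_le_nhds (lt_add_one a))).mono fun t ht => by
      linarith [norm_le_norm_sub_add (x t) z]
  obtain ⟨p, hp⟩ := exists_isWeakSeqClusterPt hbdd
  have hpS : p ∈ S := h2 p hp
  refine ⟨p, hpS, tendsto_inner_of_forall_isWeakSeqClusterPt_eq hbdd fun q hq => ?_⟩
  obtain ⟨b, hb⟩ := h1 q (h2 q hq)
  obtain ⟨c, hc⟩ := h1 p hpS
  exact hq.eq_of_tendsto_norm_sub hp hb hc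
end

section
/- Let Φ be proper convex lsc, B β-cocoercive, μ = 1/λ, and (x, v) a strong solution of v(t) ∈ ∂Φ(x(t)), λẋ(t) + v̇(t) + v(t) + B(x(t)) = 0. For z with 0 ∈ ∂Φ(z) + Bz, define Γ_z(t) = (1/2)‖x(t) − z‖² + μ[Φ(z) − Φ(x(t)) − ⟨z − x(t), v(t)⟩]. Then Γ_z is nonnegative and (d/dt)Γ_z(t) + μβ‖B(x(t)) − Bz‖² ≤ 0 for almost all t; in particular Γ_z is nonincreasing. -/
open scoped RealInnerProductSpace
open MeasureTheory Filter Set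

/-- Locally absolutely continuous on `[0, ∞)` with a.e. derivative `x'`. -/
def IsLocAC {H : Type*} [NormedAddCommGroup H] [NormedSpace ℝ H]
    (x x' : ℝ → H) : Prop :=
  (∀ a b : ℝ, 0 ≤ a → 0 ≤ b → IntegrableOn x' (Set.uIcc a b)) ∧
    ∀ s t : ℝ, 0 ≤ s → 0 ≤ t → x t - x s = ∫ u in s..t, x' u

/-!
Put `W = x + μ v`; the dynamic says `W' = -μ (v + B x)`, which is continuous, so `W` is `C¹` on
`(0, ∞)` although `x` and `v` are only absolutely continuous. `Φ ∘ x` need not be differentiable,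
but the subgradient inequality at `x(s)` gives `Γ(r) - Γ(s) ≤ ⟪x(r) - z, W(r) - W(s)⟫` for all
`r, s ≥ 0`. Applied in both directions this squeezes `Γ` between two functions with derivative
`⟪x - z, W'⟫ = -μ ⟪x - z, v + B x⟫` at `t`. Monotonicity of `∂Φ` between `(x, v)` and
`(z, -B z)`, together with cocoercivity of `B`, bounds this by `-μ β ‖B x - B z‖²`.
-/

open scoped Topology

section Subdifferential

variable {H : Type*} [NormedAddCommGroup H] [InnerProductSpace ℝ H] {Φ : H → EReal}

theorem InSubdiff.ne_top {p u y : H} (h : InSubdiff Φ p u) (hy : Φ y ≠ ⊤) : Φ p ≠ ⊤ := by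
  intro htop
  have := h y
  rw [htop, EReal.top_add_coe, top_le_iff] at this
  exact hy this

theorem InSubdiff.toReal_add_inner_le {p u q : H} (h : InSubdiff Φ p u) (hp : Φ p ≠ ⊥)
    (hq : Φ q ≠ ⊤) : (Φ p).toReal + ⟪u, q - p⟫ ≤ (Φ q).toReal := by
  have hq' : Φ q ≠ ⊥ := fun hbot => by simpa [hbot, hp] using h q
  have hpq := h q
  rw [← EReal.coe_toReal (h.ne_top hq) hp, ← EReal.coe_toReal hq hq', ← EReal.coe_add] at hpq
  exact_mod_cast hpq

theorem InSubdiff.inner_sub_nonneg (hΦ : ∀ x, Φ x ≠ ⊥) {y : H} (hy : Φ y ≠ ⊤) {p u q w : H}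
    (hp : InSubdiff Φ p u) (hq : InSubdiff Φ q w) : 0 ≤ ⟪u - w, p - q⟫ := by
  have hpq := hp.toReal_add_inner_le (hΦ p) (hq.ne_top hy)
  have hqp := hq.toReal_add_inner_le (hΦ q) (hp.ne_top hy)
  rw [← neg_sub p q, inner_neg_right] at hpq
  rw [inner_sub_left]
  linarith

end Subdifferential

section LocallyAbsolutelyContinuous

variable {E : Type*} [NormedAddCommGroup E] [NormedSpace ℝ E] {y y' w w' : ℝ → E}

theorem IsLocAC.add (hy : IsLocAC y y') (hw : IsLocAC w w') :
    IsLocAC (fun t => y t + w t) (fun t => y' t + w' t) := by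
  refine ⟨fun a b ha hb => (hy.1 a b ha hb).add (hw.1 a b ha hb), fun s t hs ht => ?_⟩
  rw [intervalIntegral.integral_add (hy.1 s t hs ht).intervalIntegrable
    (hw.1 s t hs ht).intervalIntegrable, ← hy.2 s t hs ht, ← hw.2 s t hs ht]
  exact add_sub_add_comm _ _ _ _

theorem IsLocAC.const_smul (hy : IsLocAC y y') (c : ℝ) :
    IsLocAC (fun t => c • y t) (fun t => c • y' t) := by
  refine ⟨fun a b ha hb => (hy.1 a b ha hb).smul c, fun s t hs ht => ?_⟩
  rw [intervalIntegral.integral_smul, ← hy.2 s t hs ht, smul_sub]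

theorem IsLocAC.continuousOn (hy : IsLocAC y y') : ContinuousOn y (Ici 0) := by
  intro t ht
  have hT : (0 : ℝ) ≤ t + 1 := by linarith [mem_Ici.1 ht]
  have hprim : ContinuousOn (fun s => y 0 + ∫ u in (0 : ℝ)..s, y' u) (Icc 0 (t + 1)) := by
    have := intervalIntegral.continuousOn_primitive_interval'
      (hy.1 0 (t + 1) le_rfl hT).intervalIntegrable left_mem_uIcc
    rw [uIcc_of_le hT] at this
    exact continuousOn_const.add this
  have hEq : EqOn y (fun s => y 0 + ∫ u in (0 : ℝ)..s, y' u) (Icc 0 (t + 1)) := fun s hs => by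
    simp only [← hy.2 0 s le_rfl hs.1, add_sub_cancel]
  refine ((hprim.congr hEq) t ⟨ht, by linarith⟩).mono_of_mem_nhdsWithin ?_
  exact mem_nhdsWithin.2 ⟨Iio (t + 1), isOpen_Iio, by simp, fun s hs => ⟨hs.2, hs.1.le⟩⟩

theorem IsLocAC.hasDerivAt_of_ae_eq [CompleteSpace E] {f : ℝ → E} (hy : IsLocAC y y')
    (hf : ContinuousOn f (Ioi 0)) (hae : ∀ᵐ u ∂(volume.restrict (Ioi 0)), y' u = f u)
    {t : ℝ} (ht : 0 < t) : HasDerivAt y (f t) t := by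
  have hint : HasDerivAt (fun s => ∫ u in t..s, f u) (f t) t :=
    intervalIntegral.integral_hasDerivAt_right IntervalIntegrable.refl
      (hf.stronglyMeasurableAtFilter isOpen_Ioi t ht) (hf.continuousAt (Ioi_mem_nhds ht))
  refine (hint.const_add (y t)).congr_of_eventuallyEq ?_
  filter_upwards [Ioi_mem_nhds ht] with s hs
  have hae' := (ae_restrict_iff' measurableSet_Ioi).1 hae
  rw [← intervalIntegral.integral_congr_ae (hae'.mono fun u hu hmem => hu ?_),
    ← hy.2 t s ht.le (le_of_lt hs), add_sub_cancel]
  exact lt_of_lt_of_le (lt_min ht hs) (le_of_lt hmem.1)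

end LocallyAbsolutelyContinuous

theorem continuous_of_cocoercive {H : Type*} [NormedAddCommGroup H] [InnerProductSpace ℝ H]
    {B : H → H} {β : ℝ} (hβ : 0 < β) (hB : ∀ x y, β * ‖B x - B y‖ ^ 2 ≤ ⟪B x - B y, x - y⟫) :
    Continuous B := by
  refine (LipschitzWith.of_dist_le_mul (K := Real.toNNReal β⁻¹) fun a b => ?_).continuous
  rw [dist_eq_norm, dist_eq_norm, Real.coe_toNNReal _ (by positivity), ← div_eq_inv_mul,
    le_div_iff₀ hβ]
  have hcs := (hB a b).trans (real_inner_le_norm _ _)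
  rcases (norm_nonneg (B a - B b)).eq_or_lt with h | h
  · rw [← h, zero_mul]; exact norm_nonneg _
  · nlinarith

theorem le_inner_add_of_cocoercive {H : Type*} [NormedAddCommGroup H] [InnerProductSpace ℝ H]
    {B : H → H} {β : ℝ} (hB : ∀ x y, β * ‖B x - B y‖ ^ 2 ≤ ⟪B x - B y, x - y⟫) {p z u : H}
    (hmono : 0 ≤ ⟪u + B z, p - z⟫) : β * ‖B p - B z‖ ^ 2 ≤ ⟪p - z, u + B p⟫ := by
  rw [show u + B p = (u + B z) + (B p - B z) by abel, inner_add_right, real_inner_comm,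
    real_inner_comm (B p - B z)]
  linarith [hB p z]

theorem hasDerivAt_add_smul_of_newton_dynamic {H : Type*} [NormedAddCommGroup H]
    [InnerProductSpace ℝ H] [CompleteSpace H] {B : H → H} (hB : Continuous B) {lam μ : ℝ}
    (hμlam : μ * lam = 1) {x v x' v' : ℝ → H} (hx : IsLocAC x x') (hv : IsLocAC v v')
    (heq : ∀ᵐ t ∂(volume.restrict (Ioi (0 : ℝ))), lam • x' t + v' t + v t + B (x t) = 0)
    {t : ℝ} (ht : 0 < t) : HasDerivAt (fun s => x s + μ • v s) (-(μ • (v t + B (x t)))) t := by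
  refine (hx.add (hv.const_smul μ)).hasDerivAt_of_ae_eq (f := fun s => -(μ • (v s + B (x s))))
    (((hv.continuousOn.add (hB.comp_continuousOn hx.continuousOn)).const_smul μ).neg.mono
      Ioi_subset_Ici_self) (heq.mono fun s hs => ?_) ht
  have := congrArg (μ • ·) hs
  simp only [smul_add, smul_smul, hμlam, one_smul, smul_zero] at this
  rw [eq_neg_iff_add_eq_zero, smul_add, ← add_assoc]
  exact this

section InnerSandwich

variable {E : Type*} [NormedAddCommGroup E] [InnerProductSpace ℝ E]
  {Γ : ℝ → ℝ} {Y W : ℝ → E} {S : Set ℝ} {t : ℝ}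

theorem continuousWithinAt_of_sub_le_inner
    (hle : ∀ r ∈ S, ∀ s ∈ S, Γ r - Γ s ≤ ⟪Y r, W r - W s⟫) (ht : t ∈ S)
    (hY : ContinuousWithinAt Y S t) (hW : ContinuousWithinAt W S t) :
    ContinuousWithinAt Γ S t := by
  have hWt : Tendsto (fun s => W s - W t) (𝓝[S] t) (𝓝 0) := tendsto_sub_nhds_zero_iff.2 hW
  have hlow : Tendsto (fun s => ⟪Y t, W s - W t⟫) (𝓝[S] t) (𝓝 0) := by
    simpa using tendsto_const_nhds.inner hWt
  have hup : Tendsto (fun s => ⟪Y s, W s - W t⟫) (𝓝[S] t) (𝓝 0) := by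
    simpa using hY.tendsto.inner hWt
  rw [ContinuousWithinAt, ← tendsto_sub_nhds_zero_iff]
  refine tendsto_of_tendsto_of_tendsto_of_le_of_le' hlow hup ?_ ?_ <;>
    filter_upwards [self_mem_nhdsWithin] with s hs
  · have := hle t ht s hs
    rw [← neg_sub (W s), inner_neg_right] at this
    linarith
  · exact hle s hs t ht

theorem hasDerivAt_of_sub_le_inner
    (hle : ∀ r ∈ S, ∀ s ∈ S, Γ r - Γ s ≤ ⟪Y r, W r - W s⟫) (hS : S ∈ 𝓝 t)
    (hY : ContinuousAt Y t) {W' : E} (hW : HasDerivAt W W' t) :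
    HasDerivAt Γ ⟪Y t, W'⟫ t := by
  have hφ : HasDerivAt (fun s => ⟪Y t, W s⟫) ⟪Y t, W'⟫ t := by
    simpa using (hasDerivAt_const t (Y t)).inner ℝ hW
  suffices h : HasDerivAt (fun s => Γ s - ⟪Y t, W s⟫) 0 t by
    simpa [Pi.add_def] using h.add hφ
  have ht : t ∈ S := mem_of_mem_nhds hS
  -- the remainder lies between `0` and `⟪Y s - Y t, W s - W t⟫`, which is `o(1) · O(s - t)`
  have hbound : ∀ᶠ s in 𝓝 t, ‖Γ s - ⟪Y t, W s⟫ - (Γ t - ⟪Y t, W t⟫)‖ ≤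
      ‖Y s - Y t‖ * ‖W s - W t‖ := by
    filter_upwards [hS] with s hs
    have hup := hle s hs t ht
    have hlow := hle t ht s hs
    rw [← neg_sub (W s), inner_neg_right] at hlow
    have hcs := real_inner_le_norm (Y s - Y t) (W s - W t)
    rw [inner_sub_left] at hcs
    have hlin := inner_sub_right (𝕜 := ℝ) (Y t) (W s) (W t)
    rw [Real.norm_eq_abs, abs_le]
    constructor <;> linarith
  have hY0 : (fun s => ‖Y s - Y t‖) =o[𝓝 t] fun _ => (1 : ℝ) :=
    (Asymptotics.isLittleO_one_iff ℝ).2 (tendsto_iff_norm_sub_tendsto_zero.1 hY.tendsto)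
  rw [hasDerivAt_iff_isLittleO]
  simpa using (Asymptotics.IsBigO.of_bound 1 (by simpa using hbound)).trans_isLittleO
    (hY0.mul_isBigO hW.isBigO_sub.norm_left)

end InnerSandwich

section Lyapunov

variable {H : Type*} [NormedAddCommGroup H] [InnerProductSpace ℝ H]

/-- The function `Γ_z` of the paper, evaluated at a state `(x(t), v(t)) = (p, u)`. -/
noncomputable def lyapunovGamma (Φ : H → EReal) (μ : ℝ) (z p u : H) : ℝ :=
  (1 / 2) * ‖p - z‖ ^ 2 + μ * ((Φ z).toReal - (Φ p).toReal - ⟪z - p, u⟫)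

variable {Φ : H → EReal} {μ : ℝ} {z p u q w : H}

theorem lyapunovGamma_nonneg (hμ : 0 ≤ μ) (h : (Φ p).toReal + ⟪u, z - p⟫ ≤ (Φ z).toReal) :
    0 ≤ lyapunovGamma Φ μ z p u := by
  rw [real_inner_comm] at h
  unfold lyapunovGamma
  have := mul_nonneg hμ (sub_nonneg.2 h)
  nlinarith [sq_nonneg ‖p - z‖]

theorem lyapunovGamma_sub_le (hμ : 0 ≤ μ) (h : (Φ q).toReal + ⟪w, p - q⟫ ≤ (Φ p).toReal) :
    lyapunovGamma Φ μ z p u - lyapunovGamma Φ μ z q w ≤ ⟪p - z, p + μ • u - (q + μ • w)⟫ := by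
  have e1 : ‖q - z‖ ^ 2 = ‖p - z‖ ^ 2 - 2 * ⟪p - z, p - q⟫ + ‖p - q‖ ^ 2 := by
    rw [show q - z = (p - z) - (p - q) by abel, norm_sub_sq_real]
  have e2 : ⟪z - p, u⟫ = -⟪p - z, u⟫ := by rw [← inner_neg_left, neg_sub]
  have e3 : ⟪z - q, w⟫ = -⟪p - z, w⟫ + ⟪w, p - q⟫ := by
    rw [show z - q = -(p - z) + (p - q) by abel, inner_add_left, inner_neg_left,
      real_inner_comm w (p - q)]
  have e4 : ⟪p - z, p + μ • u - (q + μ • w)⟫ = ⟪p - z, p - q⟫ + μ * (⟪p - z, u⟫ - ⟪p - z, w⟫) := by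
    rw [show p + μ • u - (q + μ • w) = (p - q) + μ • (u - w) by rw [smul_sub]; abel,
      inner_add_right, real_inner_smul_right, inner_sub_right (p - z) u w]
  unfold lyapunovGamma
  rw [e1, e2, e3, e4]
  have := mul_nonneg hμ (sub_nonneg.2 h)
  nlinarith [sq_nonneg ‖p - q‖]

end Lyapunov

theorem lyapunov_newton_general
    {H : Type*} [NormedAddCommGroup H] [InnerProductSpace ℝ H] [CompleteSpace H]
    (Φ : H → EReal)
    (hproper : (∀ x, Φ x ≠ ⊥) ∧ ∃ x, Φ x ≠ ⊤)
    (β : ℝ) (hβ : 0 < β) (B : H → H)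
    (hcoco : ∀ x y : H, β * ‖B x - B y‖ ^ 2 ≤ ⟪B x - B y, x - y⟫)
    (lam μ : ℝ) (hlam : 0 < lam) (hμ : μ = 1 / lam)
    (x v x' v' : ℝ → H)
    (hx : IsLocAC x x') (hv : IsLocAC v v')
    (hsub : ∀ t : ℝ, 0 ≤ t → InSubdiff Φ (x t) (v t))
    (heq : ∀ᵐ t ∂(volume.restrict (Ioi (0 : ℝ))),
      lam • x' t + v' t + v t + B (x t) = 0)
    (z : H) (hz : InSubdiff Φ z (-B z))
    (Γ : ℝ → ℝ)
    (hΓ : ∀ t : ℝ, Γ t = (1 / 2) * ‖x t - z‖ ^ 2 +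
      μ * ((Φ z).toReal - (Φ (x t)).toReal - ⟪z - x t, v t⟫)) :
    (∀ t : ℝ, 0 ≤ t → 0 ≤ Γ t) ∧
      (∃ g : ℝ → ℝ,
        (∀ᵐ t ∂(volume.restrict (Ioi (0 : ℝ))),
          HasDerivAt Γ (g t) t ∧ g t + μ * β * ‖B (x t) - B z‖ ^ 2 ≤ 0) ∧
        AntitoneOn Γ (Ici (0 : ℝ))) := by
  obtain ⟨hfinite, y₀, hy₀⟩ := hproper
  have hμ0 : 0 ≤ μ := by rw [hμ]; positivity
  have hμlam : μ * lam = 1 := by rw [hμ]; field_simp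
  have hΓx : ∀ t, Γ t = lyapunovGamma Φ μ z (x t) (v t) := hΓ
  have hxc := hx.continuousOn
  have hincr : ∀ r ∈ Ici (0 : ℝ), ∀ s ∈ Ici (0 : ℝ),
      Γ r - Γ s ≤ ⟪x r - z, x r + μ • v r - (x s + μ • v s)⟫ := fun r hr s hs => by
    rw [hΓx, hΓx]
    exact lyapunovGamma_sub_le hμ0
      ((hsub s hs).toReal_add_inner_le (hfinite _) ((hsub r hr).ne_top hy₀))
  set g : ℝ → ℝ := fun t => ⟪x t - z, -(μ • (v t + B (x t)))⟫
  have hderiv : ∀ t, 0 < t → HasDerivAt Γ (g t) t := fun t ht =>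
    hasDerivAt_of_sub_le_inner hincr (Ici_mem_nhds ht)
      ((hxc.continuousAt (Ici_mem_nhds ht)).sub continuousAt_const)
      (hasDerivAt_add_smul_of_newton_dynamic (continuous_of_cocoercive hβ hcoco) hμlam hx hv heq ht)
  have hdecay : ∀ t, 0 ≤ t → g t + μ * β * ‖B (x t) - B z‖ ^ 2 ≤ 0 := fun t ht => by
    have hmono := (hsub t ht).inner_sub_nonneg hfinite hy₀ hz
    rw [sub_neg_eq_add] at hmono
    have := mul_le_mul_of_nonneg_left (le_inner_add_of_cocoercive hcoco hmono) hμ0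
    simp only [g, inner_neg_right, real_inner_smul_right]
    linarith
  refine ⟨fun t ht => ?_, g,
    (ae_restrict_iff' measurableSet_Ioi).2 (ae_of_all _ fun t ht => ⟨hderiv t ht, hdecay t ht.le⟩),
    ?_⟩
  · rw [hΓx]
    exact lyapunovGamma_nonneg hμ0 ((hsub t ht).toReal_add_inner_le (hfinite _) (hz.ne_top hy₀))
  · refine antitoneOn_of_hasDerivWithinAt_nonpos (f' := g) (convex_Ici 0) (fun t ht =>
      continuousWithinAt_of_sub_le_inner hincr ht ((hxc t ht).sub continuousWithinAt_const)
        ((hx.add (hv.const_smul μ)).continuousOn t ht)) (fun t ht => ?_) (fun t ht => ?_) <;> rw [interior_Ici] at ht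
    · exact (hderiv t ht).hasDerivWithinAt
    · nlinarith [hdecay t ht.le, mul_nonneg (mul_nonneg hμ0 hβ.le) (sq_nonneg ‖B (x t) - B z‖)]

/-- The Bregman-type function `Γ_z` is a nonnegative Lyapunov function for the
regularized Newton dynamic: `Γ_z' + μβ‖B(x) - Bz‖² ≤ 0` a.e., and `Γ_z` is
nonincreasing. -/
theorem lyapunov_newton
    {H : Type*} [NormedAddCommGroup H] [InnerProductSpace ℝ H] [CompleteSpace H]
    (Φ : H → EReal)
    (hproper : (∀ x, Φ x ≠ ⊥) ∧ ∃ x, Φ x ≠ ⊤)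
    (hconvex : ∀ x y : H, ∀ a b : ℝ, 0 ≤ a → 0 ≤ b → a + b = 1 →
      Φ (a • x + b • y) ≤ (a : EReal) * Φ x + (b : EReal) * Φ y)
    (hlsc : LowerSemicontinuous Φ)
    (β : ℝ) (hβ : 0 < β) (B : H → H)
    (hcoco : ∀ x y : H, β * ‖B x - B y‖ ^ 2 ≤ ⟪B x - B y, x - y⟫)
    (lam μ : ℝ) (hlam : 0 < lam) (hμ : μ = 1 / lam)
    (x v x' v' : ℝ → H)
    (hx : IsLocAC x x') (hv : IsLocAC v v')
    (hsub : ∀ t : ℝ, 0 ≤ t → InSubdiff Φ (x t) (v t))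
    (heq : ∀ᵐ t ∂(volume.restrict (Ioi (0 : ℝ))),
      lam • x' t + v' t + v t + B (x t) = 0)
    (z : H) (hz : InSubdiff Φ z (-B z))
    (Γ : ℝ → ℝ)
    (hΓ : ∀ t : ℝ, Γ t = (1 / 2) * ‖x t - z‖ ^ 2 +
      μ * ((Φ z).toReal - (Φ (x t)).toReal - ⟪z - x t, v t⟫)) :
    (∀ t : ℝ, 0 ≤ t → 0 ≤ Γ t) ∧
      (∃ g : ℝ → ℝ,
        (∀ᵐ t ∂(volume.restrict (Ioi (0 : ℝ))),
          HasDerivAt Γ (g t) t ∧ g t + μ * β * ‖B (x t) - B z‖ ^ 2 ≤ 0) ∧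
        AntitoneOn Γ (Ici (0 : ℝ))) :=
  lyapunov_newton_general Φ hproper β hβ B hcoco lam μ hlam hμ x v x' v' hx hv hsub heq z hz Γ hΓ
end

section
/- Let Φ be proper convex lsc, B β-cocoercive, 0 < μ < 2β, 0 < h < δ with δ = 1/2 + min{1, β/μ}, and assume S = {z : 0 ∈ ∂Φ(z) + Bz} ≠ ∅. Then the (FBN) iteration x_k = prox_{μΦ}(y_k), y_{k+1} = (1 − h)y_k + h(x_k − μB(x_k)), generates sequences such that (y_k) converges weakly to some ȳ with prox_{μΦ}(ȳ) ∈ S, (x_k) converges weakly to x̄ = prox_{μΦ}(ȳ) ∈ S, B(x_k) → Bx̄ strongly, and Σ_k ‖x_{k+1} − x_k‖² < ∞, Σ_k ‖y_{k+1} − y_k‖² < ∞. -/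
open scoped RealInnerProductSpace
open Filter Topology

/-!
The iteration is the relaxation `y_{k+1} = (1 - h) y_k + h T y_k` of the forward–backward
operator `T = (I - μB) ∘ prox_{μΦ}`, whose fixed points are the points `z - μBz` with
`z ∈ S`. Firm nonexpansiveness of the prox and cocoercivity of `B` give, for every
fixed point `w`, the Fejér inequality
`‖y_{k+1} - w‖² + ε (‖(y_k - x_k) - (w - prox w)‖² + ‖B x_k - B (prox w)‖²) ≤ ‖y_k - w‖²`
with `ε > 0`; positivity of `ε` is where `h < 1/2 + min 1 (β/μ)` enters, through
`h < 2 - μ / (2β)`. Telescoping makes both residuals square summable, so `y_k - x_k` and `B x_k`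
converge strongly. The graphs of `∂Φ` and of the cocoercive `B` are closed for weak × strong
convergence, hence every weak cluster point of `(y_k)` is a fixed point of `T`, and Opial's lemma
yields weak convergence of the whole sequence.
-/

theorem summable_of_succ_add_mul_le {V a b : ℕ → ℝ} {ε : ℝ} (hε : 0 < ε) (hV : ∀ k, 0 ≤ V k)
    (ha : ∀ k, 0 ≤ a k) (hb : ∀ k, 0 ≤ b k) (h : ∀ k, V (k + 1) + ε * (a k + b k) ≤ V k) :
    Summable a ∧ Summable b := by
  have htelescope (n : ℕ) : ∑ i ∈ Finset.range n, ε * (a i + b i) ≤ V 0 - V n := by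
    induction n with
    | zero => simp
    | succ n ih => rw [Finset.sum_range_succ]; linarith [h n]
  have hab : Summable fun k => a k + b k := (summable_mul_left_iff hε.ne').mp <|
    summable_of_sum_range_le (c := V 0) (fun k => mul_nonneg hε.le (add_nonneg (ha k) (hb k)))
      fun n => by linarith [htelescope n, hV n]
  exact ⟨hab.of_nonneg_of_le ha fun k => le_add_of_nonneg_right (hb k),
    hab.of_nonneg_of_le hb fun k => le_add_of_nonneg_left (ha k)⟩

theorem Summable.norm_add_sq {E : Type*} [SeminormedAddCommGroup E] {a b : ℕ → E}
    (ha : Summable fun k => ‖a k‖ ^ 2) (hb : Summable fun k => ‖b k‖ ^ 2) :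
    Summable fun k => ‖a k + b k‖ ^ 2 :=
  ((ha.add hb).mul_left 2).of_nonneg_of_le (fun _ => sq_nonneg _) fun _ =>
    (pow_le_pow_left₀ (norm_nonneg _) (norm_add_le _ _) 2).trans add_sq_le

theorem tendsto_of_summable_norm_sub_sq {E : Type*} [SeminormedAddCommGroup E] {v : ℕ → E}
    {a : E} (hv : Summable fun k => ‖v k - a‖ ^ 2) : Tendsto v atTop (𝓝 a) := by
  rw [tendsto_iff_norm_sub_tendsto_zero]
  simpa using (hv.tendsto_atTop_zero.sqrt)

section InnerProductSpace

variable {H : Type*} [NormedAddCommGroup H] [InnerProductSpace ℝ H]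

def WeakTendsto {ι : Type*} (y : ι → H) (l : Filter ι) (p : H) : Prop :=
  ∀ v : H, Tendsto (fun k => ⟪y k, v⟫) l (𝓝 ⟪p, v⟫)

namespace WeakTendsto

variable {ι : Type*} {l : Filter ι} {y z : ι → H} {p q : H}

theorem _root_.Filter.Tendsto.weakTendsto (hy : Tendsto y l (𝓝 p)) : WeakTendsto y l p :=
  fun _ => (continuous_id.inner continuous_const).continuousAt.tendsto.comp hy

theorem sub (hy : WeakTendsto y l p) (hz : WeakTendsto z l q) :
    WeakTendsto (fun k => y k - z k) l (p - q) := fun v => by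
  simpa only [inner_sub_left] using (hy v).sub (hz v)

theorem exists_norm_le [CompleteSpace H] {y : ℕ → H} (hy : WeakTendsto y atTop p) :
    ∃ C, ∀ k, ‖y k‖ ≤ C := by
  obtain ⟨C, hC⟩ := banach_steinhaus (g := fun k => innerSL ℝ (y k)) fun v => by
    obtain ⟨C, hC⟩ := (hy v).norm.bddAbove_range
    exact ⟨C, fun k => hC ⟨k, rfl⟩⟩
  exact ⟨C, fun k => by simpa only [innerSL_apply_norm] using hC k⟩

theorem tendsto_inner [CompleteSpace H] {a y : ℕ → H} {a₀ : H} (hy : WeakTendsto y atTop p)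
    (ha : Tendsto a atTop (𝓝 a₀)) : Tendsto (fun k => ⟪a k, y k⟫) atTop (𝓝 ⟪a₀, p⟫) := by
  obtain ⟨C, hC⟩ := hy.exists_norm_le
  have hsmall : Tendsto (fun k => ⟪a k - a₀, y k⟫) atTop (𝓝 0) := by
    refine squeeze_zero_norm (fun k => (norm_inner_le_norm _ _).trans
      (mul_le_mul_of_nonneg_left (hC k) (norm_nonneg _))) ?_
    simpa using (tendsto_iff_norm_sub_tendsto_zero.mp ha).mul_const C
  have hfixed : Tendsto (fun k => ⟪a₀, y k⟫) atTop (𝓝 ⟪a₀, p⟫) := by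
    simpa only [real_inner_comm a₀] using hy a₀
  simpa [inner_sub_left] using hsmall.add hfixed

theorem eq_of_tendsto_norm_sub_sq {y : ℕ → H} {φ ψ : ℕ → ℕ} {p p' : H}
    (hφ : Tendsto φ atTop atTop) (hψ : Tendsto ψ atTop atTop)
    (hp : WeakTendsto (y ∘ φ) atTop p) (hp' : WeakTendsto (y ∘ ψ) atTop p')
    {l l' : ℝ} (hl : Tendsto (fun k => ‖y k - p‖ ^ 2) atTop (𝓝 l))
    (hl' : Tendsto (fun k => ‖y k - p'‖ ^ 2) atTop (𝓝 l')) : p = p' := by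
  set L := (l' - l + ‖p‖ ^ 2 - ‖p'‖ ^ 2) / 2
  have hpolar : Tendsto (fun k => ⟪y k, p - p'⟫) atTop (𝓝 L) := by
    refine ((((hl'.sub hl).add_const _).sub_const _).div_const 2).congr fun k => ?_
    rw [norm_sub_sq_real, norm_sub_sq_real, inner_sub_right]
    ring
  have hL : ⟪p, p - p'⟫ = L := tendsto_nhds_unique (hp (p - p')) (hpolar.comp hφ)
  have hL' : ⟪p', p - p'⟫ = L := tendsto_nhds_unique (hp' (p - p')) (hpolar.comp hψ)
  rw [← sub_eq_zero, ← inner_self_eq_zero (𝕜 := ℝ), inner_sub_left, hL, hL', sub_self]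

end WeakTendsto

theorem exists_strictMono_weakTendsto [CompleteSpace H] {y : ℕ → H} {C : ℝ}
    (hC : ∀ k, ‖y k‖ ≤ C) :
    ∃ φ : ℕ → ℕ, StrictMono φ ∧ ∃ p, WeakTendsto (y ∘ φ) atTop p := by
  set K := (Submodule.span ℝ (Set.range y)).topologicalClosure
  have hyK : ∀ k, y k ∈ K :=
    fun k => Submodule.le_topologicalClosure _ (Submodule.subset_span (Set.mem_range_self k))
  have : CompleteSpace K := (Submodule.isClosed_topologicalClosure _).completeSpace_coe
  have : TopologicalSpace.SeparableSpace K := by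
    refine TopologicalSpace.IsSeparable.separableSpace ?_
    rw [Submodule.topologicalClosure_coe]
    exact (Set.countable_range y).isSeparable.span.closure
  -- sequential Banach–Alaoglu in the separable Hilbert space `K`, then Riesz representation
  let ψ : ℕ → WeakDual ℝ K := fun k => InnerProductSpace.toDual ℝ K ⟨y k, hyK k⟩
  obtain ⟨f, -, φ, hφ, hf⟩ := WeakDual.isSeqCompact_closedBall ℝ K 0 C (x := ψ) fun k => by
    rw [Set.mem_preimage, mem_closedBall_zero_iff]
    exact ((InnerProductSpace.toDual ℝ K).norm_map _).trans_le (hC k)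
  refine ⟨φ, hφ, (InnerProductSpace.toDual ℝ K).symm (WeakDual.toStrongDual f), fun v => ?_⟩
  have := ((WeakDual.eval_continuous (K.orthogonalProjectionOnto v)).tendsto f).comp hf
  convert this using 2 with k
  · exact (K.inner_orthogonalProjectionOnto_eq_of_mem_left ⟨y (φ k), hyK (φ k)⟩ v).symm
  · rw [← K.inner_orthogonalProjectionOnto_eq_of_mem_left, InnerProductSpace.toDual_symm_apply]
    rfl

theorem exists_weakTendsto_of_fejer [CompleteSpace H] {y : ℕ → H} {F : Set H}
    (hF : F.Nonempty) (hfejer : ∀ w ∈ F, ∀ k, ‖y (k + 1) - w‖ ≤ ‖y k - w‖)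
    (hcluster : ∀ (φ : ℕ → ℕ) (p : H), Tendsto φ atTop atTop →
      WeakTendsto (y ∘ φ) atTop p → p ∈ F) :
    ∃ p ∈ F, WeakTendsto y atTop p := by
  have hanti (w : H) (hw : w ∈ F) : Antitone fun k => ‖y k - w‖ :=
    antitone_nat_of_succ_le (hfejer w hw)
  obtain ⟨w, hw⟩ := hF
  have hbdd (k : ℕ) : ‖y k‖ ≤ ‖y 0 - w‖ + ‖w‖ := calc
    ‖y k‖ = ‖(y k - w) + w‖ := by rw [sub_add_cancel]
    _ ≤ ‖y k - w‖ + ‖w‖ := norm_add_le _ _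
    _ ≤ ‖y 0 - w‖ + ‖w‖ := by gcongr; exact hanti w hw (Nat.zero_le k)
  have hdist (q : H) (hq : q ∈ F) : ∃ l, Tendsto (fun k => ‖y k - q‖ ^ 2) atTop (𝓝 l) :=
    ⟨_, (tendsto_atTop_ciInf (hanti q hq)
      ⟨0, Set.forall_mem_range.mpr fun _ => norm_nonneg _⟩).pow 2⟩
  obtain ⟨φ, hφ, p, hp⟩ := exists_strictMono_weakTendsto hbdd
  have hpF := hcluster φ p hφ.tendsto_atTop hp
  refine ⟨p, hpF, fun v => tendsto_of_subseq_tendsto fun ns hns => ?_⟩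
  obtain ⟨ψ, hψ, p', hp'⟩ := exists_strictMono_weakTendsto fun k => hbdd (ns k)
  have hnsψ : Tendsto (ns ∘ ψ) atTop atTop := hns.comp hψ.tendsto_atTop
  obtain ⟨l, hl⟩ := hdist p hpF
  obtain ⟨l', hl'⟩ := hdist p' (hcluster _ p' hnsψ hp')
  obtain rfl := hp.eq_of_tendsto_norm_sub_sq hφ.tendsto_atTop hnsψ hp' hl hl'
  exact ⟨ψ, hp' v⟩

theorem quadratic_form_nonneg {a b c : ℝ} (ha : 0 < a) (hbc : b ^ 2 ≤ a * c) (u d : H) :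
    0 ≤ a * ‖u‖ ^ 2 + c * ‖d‖ ^ 2 + 2 * b * ⟪u, d⟫ := by
  have hsq : a * (a * ‖u‖ ^ 2 + c * ‖d‖ ^ 2 + 2 * b * ⟪u, d⟫) =
      ‖a • u + b • d‖ ^ 2 + (a * c - b ^ 2) * ‖d‖ ^ 2 := by
    rw [norm_add_sq_real, norm_smul, norm_smul, real_inner_smul_left, real_inner_smul_right,
      Real.norm_eq_abs, Real.norm_eq_abs, mul_pow, mul_pow, sq_abs, sq_abs]
    ring
  refine (mul_nonneg_iff_of_pos_left ha).mp (hsq ▸ ?_)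
  have := sub_nonneg.mpr hbc
  positivity

theorem exists_pos_le_quadratic_form {a b c : ℝ} (ha : 0 < a) (hc : 0 < c)
    (hbc : b ^ 2 < a * c) : ∃ ε > 0, ∀ u d : H,
      ε * (‖u‖ ^ 2 + ‖d‖ ^ 2) ≤ a * ‖u‖ ^ 2 + c * ‖d‖ ^ 2 + 2 * b * ⟪u, d⟫ := by
  -- chosen so that `(a - ε) * (c - ε) = b ^ 2 + ε ^ 2`
  set ε := (a * c - b ^ 2) / (a + c)
  have hε : 0 < ε := div_pos (by linarith) (by linarith)
  have haε : 0 < a - ε := by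
    rw [sub_pos, div_lt_iff₀ (by linarith)]; nlinarith [sq_nonneg b]
  have hprod : (a - ε) * (c - ε) = b ^ 2 + ε ^ 2 := by
    simp only [ε]; field_simp; ring
  refine ⟨ε, hε, fun u d => ?_⟩
  have := quadratic_form_nonneg (b := b) (c := c - ε) haε (by nlinarith) u d
  linarith

section Subdifferential

variable {Φ : H → EReal}

theorem InSubdiff.ne_top_s17 (hfin : ∃ x, Φ x ≠ ⊤) {x v : H} (hx : InSubdiff Φ x v) : Φ x ≠ ⊤ := by
  obtain ⟨x₀, hx₀⟩ := hfin
  intro htop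
  have := hx x₀
  rw [htop, EReal.top_add_coe, top_le_iff] at this
  exact hx₀ this

theorem InSubdiff.inner_sub_nonneg_s17 (hproper : (∀ x, Φ x ≠ ⊥) ∧ ∃ x, Φ x ≠ ⊤) {a b va vb : H}
    (ha : InSubdiff Φ a va) (hb : InSubdiff Φ b vb) : 0 ≤ ⟪va - vb, a - b⟫ := by
  have hΦa := (EReal.coe_toReal (ha.ne_top_s17 hproper.2) (hproper.1 a)).symm
  have hΦb := (EReal.coe_toReal (hb.ne_top_s17 hproper.2) (hproper.1 b)).symm
  have hab := ha b
  have hba := hb a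
  rw [hΦa, hΦb, ← EReal.coe_add, EReal.coe_le_coe_iff] at hab hba
  have hswap : ⟪va, b - a⟫ = -⟪va, a - b⟫ := by rw [← inner_neg_right, neg_sub]
  rw [inner_sub_left]
  linarith

theorem InSubdiff.inner_sub_nonneg_of_tendsto [CompleteSpace H]
    (hproper : (∀ x, Φ x ≠ ⊥) ∧ ∃ x, Φ x ≠ ⊤) {a v : ℕ → H} {a₀ v₀ b vb : H}
    (hsub : ∀ k, InSubdiff Φ (a k) (v k)) (ha : WeakTendsto a atTop a₀)
    (hv : Tendsto v atTop (𝓝 v₀)) (hb : InSubdiff Φ b vb) : 0 ≤ ⟪v₀ - vb, a₀ - b⟫ :=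
  ge_of_tendsto' ((ha.sub tendsto_const_nhds.weakTendsto).tendsto_inner (hv.sub_const vb))
    fun k => (hsub k).inner_sub_nonneg_s17 hproper hb

end Subdifferential

section Prox

variable {Φ : H → EReal} {μ : ℝ} {prox : H → H}

theorem prox_inner_sub_nonneg (hproper : (∀ x, Φ x ≠ ⊥) ∧ ∃ x, Φ x ≠ ⊤) (hμ0 : 0 < μ)
    (hprox : ∀ w, InSubdiff Φ (prox w) ((1 / μ) • (w - prox w))) (a b : H) :
    0 ≤ ⟪(a - prox a) - (b - prox b), prox a - prox b⟫ := by
  have := (hprox a).inner_sub_nonneg_s17 hproper (hprox b)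
  rw [← smul_sub, real_inner_smul_left] at this
  exact (mul_nonneg_iff_of_pos_left (by positivity)).mp this

theorem prox_norm_sub_le (hproper : (∀ x, Φ x ≠ ⊥) ∧ ∃ x, Φ x ≠ ⊤) (hμ0 : 0 < μ)
    (hprox : ∀ w, InSubdiff Φ (prox w) ((1 / μ) • (w - prox w))) (a b : H) :
    ‖prox a - prox b‖ ≤ ‖a - b‖ := by
  have hfirm := prox_inner_sub_nonneg hproper hμ0 hprox a b
  rw [sub_sub_sub_comm, inner_sub_left, real_inner_self_eq_norm_sq] at hfirm
  nlinarith [real_inner_le_norm (a - b) (prox a - prox b), norm_nonneg (prox a - prox b),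
    norm_nonneg (a - b)]

theorem prox_eq_of_forall_inner_nonneg (hμ0 : 0 < μ)
    (hprox : ∀ w, InSubdiff Φ (prox w) ((1 / μ) • (w - prox w))) {w p : H}
    (h : ∀ b vb, InSubdiff Φ b vb → 0 ≤ ⟪(1 / μ) • (w - p) - vb, p - b⟫) : prox w = p := by
  have := h _ _ (hprox w)
  rw [← smul_sub, sub_sub_sub_cancel_left, real_inner_smul_left, ← neg_sub p,
    inner_neg_left, real_inner_self_eq_norm_sq, mul_neg, neg_nonneg] at this
  have : p - prox w = 0 := by simpa using nonpos_of_mul_nonpos_right this (by positivity)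
  exact (sub_eq_zero.mp this).symm

theorem prox_eq_of_inSubdiff (hproper : (∀ x, Φ x ≠ ⊥) ∧ ∃ x, Φ x ≠ ⊤) (hμ0 : 0 < μ)
    (hprox : ∀ w, InSubdiff Φ (prox w) ((1 / μ) • (w - prox w))) {w p : H}
    (hp : InSubdiff Φ p ((1 / μ) • (w - p))) : prox w = p :=
  prox_eq_of_forall_inner_nonneg hμ0 hprox fun _ _ hb => hp.inner_sub_nonneg_s17 hproper hb

theorem prox_eq_of_weakTendsto [CompleteSpace H] (hproper : (∀ x, Φ x ≠ ⊥) ∧ ∃ x, Φ x ≠ ⊤)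
    (hμ0 : 0 < μ) (hprox : ∀ w, InSubdiff Φ (prox w) ((1 / μ) • (w - prox w)))
    {y : ℕ → H} {p r : H} (hp : WeakTendsto (fun k => prox (y k)) atTop p)
    (hr : Tendsto (fun k => y k - prox (y k)) atTop (𝓝 r)) : prox (p + r) = p :=
  prox_eq_of_forall_inner_nonneg hμ0 hprox fun _ _ hb => by
    rw [add_sub_cancel_left]
    exact InSubdiff.inner_sub_nonneg_of_tendsto hproper (fun k => hprox (y k)) hp
      (hr.const_smul (1 / μ)) hb

end Prox

theorem eq_of_weakTendsto_of_cocoercive [CompleteSpace H] {B : H → H} {β : ℝ} (hβ : 0 < β)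
    (hcoco : ∀ x y : H, β * ‖B x - B y‖ ^ 2 ≤ ⟪B x - B y, x - y⟫) {x : ℕ → H} {p b : H}
    (hx : WeakTendsto x atTop p) (hB : Tendsto (fun k => B (x k)) atTop (𝓝 b)) : B p = b := by
  have hlim : Tendsto (fun k => ⟪B (x k) - B p, x k - p⟫) atTop (𝓝 ⟪b - B p, p - p⟫) :=
    (hx.sub tendsto_const_nhds.weakTendsto).tendsto_inner (hB.sub_const _)
  have hle : β * ‖b - B p‖ ^ 2 ≤ 0 := by
    simpa using le_of_tendsto_of_tendsto' (((hB.sub_const _).norm.pow 2).const_mul β) hlim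
      fun k => hcoco (x k) p
  have : b - B p = 0 := by simpa using nonpos_of_mul_nonpos_right hle hβ
  exact (sub_eq_zero.mp this).symm

theorem norm_relaxed_sub_sq_add_le {β h μ : ℝ} (hh : 0 ≤ h) (hμ : 0 ≤ μ) {p u d : H}
    (hup : 0 ≤ ⟪u, p⟫) (hdp : β * ‖d‖ ^ 2 ≤ ⟪d, p⟫) :
    ‖p + (1 - h) • u - (h * μ) • d‖ ^ 2 + (h * (2 - h) * ‖u‖ ^ 2
      + h * μ * (2 * β - h * μ) * ‖d‖ ^ 2 + 2 * (h * μ * (1 - h)) * ⟪u, d⟫) ≤ ‖p + u‖ ^ 2 := by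
  have hexpand : ‖p + u‖ ^ 2 - ‖p + (1 - h) • u - (h * μ) • d‖ ^ 2 - (h * (2 - h) * ‖u‖ ^ 2
      + h * μ * (2 * β - h * μ) * ‖d‖ ^ 2 + 2 * (h * μ * (1 - h)) * ⟪u, d⟫) =
      2 * h * ⟪u, p⟫ + 2 * (h * μ) * (⟪d, p⟫ - β * ‖d‖ ^ 2) := by
    simp only [norm_sub_sq_real, norm_add_sq_real, norm_smul, inner_add_left,
      real_inner_smul_left, real_inner_smul_right, mul_pow, Real.norm_eq_abs,
      sq_abs, real_inner_comm p]
    ring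
  nlinarith [mul_nonneg hh hup, mul_nonneg (mul_nonneg hh hμ) (sub_nonneg.mpr hdp)]

theorem fbn_stepsize_lt {β μ h : ℝ} (hμ0 : 0 < μ) (hμβ : μ < 2 * β)
    (hhδ : h < 1 / 2 + min 1 (β / μ)) : h * (2 * β) < 4 * β - μ := by
  rcases le_or_gt 1 (β / μ) with hle | hlt
  · rw [min_eq_left hle] at hhδ
    have : μ ≤ β := by rwa [le_div_iff₀ hμ0, one_mul] at hle
    nlinarith
  · rw [min_eq_right hlt.le] at hhδ
    have hβμ : β < μ := by rwa [div_lt_one hμ0] at hlt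
    have hhμ : h * μ < μ / 2 + β := by
      have := mul_lt_mul_of_pos_right hhδ hμ0
      rwa [add_mul, div_mul_cancel₀ _ hμ0.ne', one_div_mul_eq_div] at this
    nlinarith [mul_pos (by linarith : (0:ℝ) < 2 * β - μ) (by linarith : (0:ℝ) < μ - β)]

theorem fbn_exists_pos_le_quadratic_form {β μ h : ℝ} (hμ0 : 0 < μ) (hμβ : μ < 2 * β)
    (hh0 : 0 < h) (hhδ : h < 1 / 2 + min 1 (β / μ)) :
    ∃ ε > 0, ∀ u d : H, ε * (‖u‖ ^ 2 + ‖d‖ ^ 2) ≤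
      h * (2 - h) * ‖u‖ ^ 2 + h * μ * (2 * β - h * μ) * ‖d‖ ^ 2
        + 2 * (h * μ * (1 - h)) * ⟪u, d⟫ := by
  have hstep := fbn_stepsize_lt hμ0 hμβ hhδ
  have h2 : 0 < 2 - h := by nlinarith
  have h2β : 0 < 2 * β - h * μ := by nlinarith [sq_nonneg (2 * β - μ)]
  refine exists_pos_le_quadratic_form (by positivity) (by positivity) ?_
  -- the determinant is `h ^ 2 * μ * (2 * β * (2 - h) - μ)`
  nlinarith [mul_pos (mul_pos hh0 hh0) hμ0]

def forwardBackward (prox B : H → H) (μ : ℝ) (w : H) : H :=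
  prox w - μ • B (prox w)

section FBN

variable {Φ : H → EReal} {β : ℝ} {B : H → H} {μ h : ℝ} {prox : H → H} {x y : ℕ → H}

theorem inSubdiff_of_forwardBackward_eq (hμ0 : 0 < μ)
    (hprox : ∀ w, InSubdiff Φ (prox w) ((1 / μ) • (w - prox w))) {w : H}
    (hw : forwardBackward prox B μ w = w) : InSubdiff Φ (prox w) (-B (prox w)) := by
  convert hprox w using 1
  nth_rw 2 [← hw]
  rw [forwardBackward, sub_sub_cancel_left, smul_neg, smul_smul, one_div,
    inv_mul_cancel₀ hμ0.ne', one_smul]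

theorem fbn_fejer (hproper : (∀ x, Φ x ≠ ⊥) ∧ ∃ x, Φ x ≠ ⊤)
    (hcoco : ∀ x y : H, β * ‖B x - B y‖ ^ 2 ≤ ⟪B x - B y, x - y⟫)
    (hμ0 : 0 < μ) (hμβ : μ < 2 * β) (hh0 : 0 < h) (hhδ : h < 1 / 2 + min 1 (β / μ))
    (hprox : ∀ w, InSubdiff Φ (prox w) ((1 / μ) • (w - prox w)))
    (hxk : ∀ k, x k = prox (y k))
    (hyk : ∀ k, y (k + 1) = (1 - h) • y k + h • (x k - μ • B (x k))) :
    ∃ ε > 0, ∀ w, forwardBackward prox B μ w = w → ∀ k,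
      ‖y (k + 1) - w‖ ^ 2 + ε * (‖(y k - x k) - (w - prox w)‖ ^ 2
        + ‖B (x k) - B (prox w)‖ ^ 2) ≤ ‖y k - w‖ ^ 2 := by
  obtain ⟨ε, hε, hQ⟩ := fbn_exists_pos_le_quadratic_form (H := H) hμ0 hμβ hh0 hhδ
  refine ⟨ε, hε, fun w hw k => ?_⟩
  have hfirm := prox_inner_sub_nonneg hproper hμ0 hprox (y k) w
  rw [← hxk] at hfirm
  have hnext : y (k + 1) - w = (x k - prox w) + (1 - h) • ((y k - x k) - (w - prox w))
      - (h * μ) • (B (x k) - B (prox w)) := by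
    rw [forwardBackward] at hw
    rw [hyk k]
    linear_combination (norm := module) h • hw
  have hcurr : y k - w = (x k - prox w) + ((y k - x k) - (w - prox w)) := by abel
  rw [hnext, hcurr]
  have := norm_relaxed_sub_sq_add_le hh0.le hμ0.le hfirm (hcoco (x k) (prox w))
  linarith [hQ ((y k - x k) - (w - prox w)) (B (x k) - B (prox w))]

theorem fbn_weak_cluster [CompleteSpace H] (hproper : (∀ x, Φ x ≠ ⊥) ∧ ∃ x, Φ x ≠ ⊤)
    (hβ : 0 < β) (hcoco : ∀ x y : H, β * ‖B x - B y‖ ^ 2 ≤ ⟪B x - B y, x - y⟫) (hμ0 : 0 < μ)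
    (hprox : ∀ w, InSubdiff Φ (prox w) ((1 / μ) • (w - prox w)))
    (hxk : ∀ k, x k = prox (y k)) {w₀ : H} (hw₀ : forwardBackward prox B μ w₀ = w₀)
    (hres : Tendsto (fun k => y k - x k) atTop (𝓝 (w₀ - prox w₀)))
    (hBres : Tendsto (fun k => B (x k)) atTop (𝓝 (B (prox w₀))))
    ⦃φ : ℕ → ℕ⦄ (hφ : Tendsto φ atTop atTop) ⦃w : H⦄ (hw : WeakTendsto (y ∘ φ) atTop w) :
    WeakTendsto (x ∘ φ) atTop (prox w) ∧ forwardBackward prox B μ w = w ∧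
      B (prox w) = B (prox w₀) := by
  have hresφ : Tendsto (fun k => y (φ k) - prox (y (φ k))) atTop (𝓝 (w₀ - prox w₀)) := by
    simpa only [Function.comp_def, hxk] using hres.comp hφ
  have hxφ : WeakTendsto (fun k => prox (y (φ k))) atTop (w - (w₀ - prox w₀)) := by
    simpa only [Function.comp_apply, sub_sub_cancel] using hw.sub hresφ.weakTendsto
  have hPw : prox w = w - (w₀ - prox w₀) := by
    simpa using prox_eq_of_weakTendsto hproper hμ0 hprox hxφ hresφ
  have hxφ' : WeakTendsto (x ∘ φ) atTop (prox w) := by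
    rw [hPw]
    simpa only [Function.comp_def, hxk] using hxφ
  have hBw := eq_of_weakTendsto_of_cocoercive hβ hcoco hxφ' (hBres.comp hφ)
  refine ⟨hxφ', ?_, hBw⟩
  rw [forwardBackward] at hw₀ ⊢
  rw [hBw, hPw]
  linear_combination (norm := module) hw₀

theorem fbn_summable_increments (hproper : (∀ x, Φ x ≠ ⊥) ∧ ∃ x, Φ x ≠ ⊤) (hμ0 : 0 < μ)
    (hprox : ∀ w, InSubdiff Φ (prox w) ((1 / μ) • (w - prox w)))
    (hxk : ∀ k, x k = prox (y k))
    (hyk : ∀ k, y (k + 1) = (1 - h) • y k + h • (x k - μ • B (x k)))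
    {w : H} (hw : forwardBackward prox B μ w = w)
    (hres : Summable fun k => ‖(y k - x k) - (w - prox w)‖ ^ 2)
    (hBres : Summable fun k => ‖B (x k) - B (prox w)‖ ^ 2) :
    (Summable fun k => ‖x (k + 1) - x k‖ ^ 2) ∧ Summable fun k => ‖y (k + 1) - y k‖ ^ 2 := by
  have hμBres : Summable fun k => ‖μ • (B (x k) - B (prox w))‖ ^ 2 := by
    simpa only [norm_smul, mul_pow, Real.norm_eq_abs, sq_abs] using hBres.mul_left (μ ^ 2)
  have hy : Summable fun k => ‖y (k + 1) - y k‖ ^ 2 := by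
    refine ((hres.norm_add_sq hμBres).mul_left (h ^ 2)).congr fun k => ?_
    have hstep : y (k + 1) - y k =
        (-h) • (((y k - x k) - (w - prox w)) + μ • (B (x k) - B (prox w))) := by
      rw [forwardBackward] at hw
      rw [hyk k]
      linear_combination (norm := module) h • hw
    rw [hstep, norm_smul, mul_pow, Real.norm_eq_abs, sq_abs, neg_sq]
  refine ⟨hy.of_nonneg_of_le (fun _ => sq_nonneg _) fun k => ?_, hy⟩
  rw [hxk, hxk]
  exact pow_le_pow_left₀ (norm_nonneg _) (prox_norm_sub_le hproper hμ0 hprox _ _) 2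

end FBN

end InnerProductSpace

theorem FBN_convergence_general
    {H : Type*} [NormedAddCommGroup H] [InnerProductSpace ℝ H] [CompleteSpace H]
    (Φ : H → EReal)
    (hproper : (∀ x, Φ x ≠ ⊥) ∧ ∃ x, Φ x ≠ ⊤)
    (β : ℝ) (B : H → H)
    (hcoco : ∀ x y : H, β * ‖B x - B y‖ ^ 2 ≤ ⟪B x - B y, x - y⟫)
    (μ h : ℝ) (hμ0 : 0 < μ) (hμβ : μ < 2 * β)
    (hh0 : 0 < h) (hhδ : h < 1 / 2 + min 1 (β / μ))
    (hS : ∃ z : H, InSubdiff Φ z (-B z))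
    (prox : H → H)
    (hprox : ∀ w : H, InSubdiff Φ (prox w) ((1 / μ) • (w - prox w)))
    (x y : ℕ → H)
    (hxk : ∀ k : ℕ, x k = prox (y k))
    (hyk : ∀ k : ℕ, y (k + 1) = (1 - h) • y k + h • (x k - μ • B (x k))) :
    ∃ ybar : H,
      (∀ w : H, Tendsto (fun k => ⟪y k, w⟫) atTop (nhds ⟪ybar, w⟫)) ∧
      InSubdiff Φ (prox ybar) (-B (prox ybar)) ∧
      (∀ w : H, Tendsto (fun k => ⟪x k, w⟫) atTop (nhds ⟪prox ybar, w⟫)) ∧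
      Tendsto (fun k => B (x k)) atTop (nhds (B (prox ybar))) ∧
      (Summable fun k => ‖x (k + 1) - x k‖ ^ 2) ∧
      (Summable fun k => ‖y (k + 1) - y k‖ ^ 2) := by
  obtain ⟨z, hz⟩ := hS
  have hPz : prox (z - μ • B z) = z := prox_eq_of_inSubdiff hproper hμ0 hprox <| by
    rwa [sub_sub_cancel_left, smul_neg, smul_smul, one_div, inv_mul_cancel₀ hμ0.ne', one_smul]
  have hw₀ : forwardBackward prox B μ (z - μ • B z) = z - μ • B z := by
    rw [forwardBackward, hPz]
  obtain ⟨ε, hε, hfejer⟩ := fbn_fejer hproper hcoco hμ0 hμβ hh0 hhδ hprox hxk hyk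
  obtain ⟨hres, hBres⟩ := summable_of_succ_add_mul_le (V := fun k => ‖y k - _‖ ^ 2) hε
    (fun _ => sq_nonneg _) (fun _ => sq_nonneg _) (fun _ => sq_nonneg _) (hfejer _ hw₀)
  have hβ : 0 < β := by linarith
  have hcluster := fbn_weak_cluster hproper hβ hcoco hμ0 hprox hxk hw₀
    (tendsto_of_summable_norm_sub_sq hres) (tendsto_of_summable_norm_sub_sq hBres)
  have hmono (w : H) (hw : forwardBackward prox B μ w = w) (k : ℕ) :
      ‖y (k + 1) - w‖ ≤ ‖y k - w‖ :=
    (pow_le_pow_iff_left₀ (norm_nonneg _) (norm_nonneg _) two_ne_zero).mp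
      (le_of_add_le_of_nonneg_left (hfejer w hw k) (by positivity))
  obtain ⟨ybar, hfix, hy⟩ := exists_weakTendsto_of_fejer
    (F := {w | forwardBackward prox B μ w = w}) ⟨_, hw₀⟩ hmono
    fun _ _ hφ hw => (hcluster hφ hw).2.1
  obtain ⟨hx, -, hBx⟩ := hcluster tendsto_id hy
  exact ⟨ybar, hy, inSubdiff_of_forwardBackward_eq hμ0 hprox hfix, hx,
    hBx ▸ tendsto_of_summable_norm_sub_sq hBres,
    fbn_summable_increments hproper hμ0 hprox hxk hyk hw₀ hres hBres⟩

/-- Convergence of the (FBN) algorithm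
`x_k = prox_{μΦ}(y_k)`, `y_{k+1} = (1-h) y_k + h (x_k - μ B x_k)`:
`(y_k)` converges weakly to some `ȳ` with `prox_{μΦ}(ȳ) ∈ S`, `(x_k)`
converges weakly to `x̄ = prox_{μΦ}(ȳ) ∈ S`, `B x_k → B x̄` strongly, and the
increments are square summable. -/
theorem FBN_convergence
    {H : Type*} [NormedAddCommGroup H] [InnerProductSpace ℝ H] [CompleteSpace H]
    (Φ : H → EReal)
    (hproper : (∀ x, Φ x ≠ ⊥) ∧ ∃ x, Φ x ≠ ⊤)
    (hconvex : ∀ x y : H, ∀ a b : ℝ, 0 ≤ a → 0 ≤ b → a + b = 1 →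
      Φ (a • x + b • y) ≤ (a : EReal) * Φ x + (b : EReal) * Φ y)
    (hlsc : LowerSemicontinuous Φ)
    (β : ℝ) (hβ : 0 < β) (B : H → H)
    (hcoco : ∀ x y : H, β * ‖B x - B y‖ ^ 2 ≤ ⟪B x - B y, x - y⟫)
    (μ h : ℝ) (hμ0 : 0 < μ) (hμβ : μ < 2 * β)
    (hh0 : 0 < h) (hhδ : h < 1 / 2 + min 1 (β / μ))
    (hS : ∃ z : H, InSubdiff Φ z (-B z))
    (prox : H → H)
    (hprox : ∀ w : H, InSubdiff Φ (prox w) ((1 / μ) • (w - prox w)))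
    (x y : ℕ → H)
    (hxk : ∀ k : ℕ, x k = prox (y k))
    (hyk : ∀ k : ℕ, y (k + 1) = (1 - h) • y k + h • (x k - μ • B (x k))) :
    ∃ ybar : H,
      (∀ w : H, Tendsto (fun k => ⟪y k, w⟫) atTop (nhds ⟪ybar, w⟫)) ∧
      InSubdiff Φ (prox ybar) (-B (prox ybar)) ∧
      (∀ w : H, Tendsto (fun k => ⟪x k, w⟫) atTop (nhds ⟪prox ybar, w⟫)) ∧
      Tendsto (fun k => B (x k)) atTop (nhds (B (prox ybar))) ∧
      (Summable fun k => ‖x (k + 1) - x k‖ ^ 2) ∧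
      (Summable fun k => ‖y (k + 1) - y k‖ ^ 2) :=
  FBN_convergence_general Φ hproper β B hcoco μ h hμ0 hμβ hh0 hhδ hS prox hprox x y hxk hyk
end

section
/- Let Φ be proper convex lsc, B β-cocoercive, 0 < μ < 4β, x a solution of ẋ(t) + x(t) − prox_{μΦ}(x(t) − μB(x(t))) = 0, and z with 0 ∈ ∂Φ(z) + Bz. Then for all t, 0 ≥ (1/(2μ))(d/dt)‖x(t) − z‖² + (1/μ)‖ẋ(t)‖² + ⟨B(x(t)) − Bz, x(t) − z⟩ + ⟨ẋ(t), B(x(t)) − Bz⟩; consequently, with α = μ/4 + β, (1/(2μ))(d/dt)‖x(t) − z‖² + ((4β − μ)/(μ(μ + 4β)))‖ẋ(t)‖² + (1/8)(4β − μ)‖B(x(t)) − Bz‖² ≤ 0, so t ↦ ‖x(t) − z‖ is nonincreasing. -/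
/-!
Monotonicity of the subdifferential, applied to the prox step `x + ẋ = prox_{μΦ}(x - μBx)`
(subgradient `-Bx - ẋ/μ` at `x + ẋ`) and to `z` (subgradient `-Bz`), gives the first inequality
outright. Cocoercivity `β‖Bx - Bz‖² ≤ ⟪Bx - Bz, x - z⟫` and the square `0 ≤ ‖ẋ + α (Bx - Bz)‖²`
with `α = μ/4 + β` turn it into the second one; as its last two terms are nonnegative when
`μ < 4β`, the derivative of `‖x - z‖²` is nonpositive.
-/

open scoped RealInnerProductSpace
open Set

section

variable {H : Type*} [NormedAddCommGroup H] [InnerProductSpace ℝ H]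

namespace InSubdiff

variable {Φ : H → EReal} {x y u v : H}

theorem ne_top_s19 (hx : InSubdiff Φ x u) (hy : Φ y ≠ ⊤) : Φ x ≠ ⊤ := by
  intro h
  have hxy := hx y
  rw [h, EReal.top_add_coe] at hxy
  exact hy (top_le_iff.mp hxy)

theorem inner_sub_nonneg_s19 (hbot : ∀ w, Φ w ≠ ⊥) (hx : InSubdiff Φ x u) (hy : InSubdiff Φ y v)
    (hy_top : Φ y ≠ ⊤) : 0 ≤ ⟪u - v, x - y⟫ := by
  have hxy := hx y
  have hyx := hy x
  rw [← EReal.coe_toReal (hx.ne_top_s19 hy_top) (hbot x), ← EReal.coe_toReal hy_top (hbot y),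
    ← EReal.coe_add, EReal.coe_le_coe_iff] at hxy hyx
  have hsplit : ⟪u - v, x - y⟫ = -(⟪u, y - x⟫ + ⟪v, x - y⟫) := by
    simp only [inner_sub_left, inner_sub_right]
    ring
  linarith

end InSubdiff

theorem forward_backward_step_le {Φ : H → EReal} (hbot : ∀ w, Φ w ≠ ⊥) {B : H → H} {μ : ℝ}
    (hμ : μ ≠ 0) {y v z : H} (hstep : InSubdiff Φ (v + y) ((1 / μ) • (y - μ • B y - (v + y))))
    (hz : InSubdiff Φ z (-B z)) (hz_top : Φ z ≠ ⊤) :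
    (1 / μ) * ⟪y - z, v⟫ + (1 / μ) * ‖v‖ ^ 2 + ⟪B y - B z, y - z⟫ + ⟪v, B y - B z⟫ ≤ 0 := by
  have hmono := hstep.inner_sub_nonneg_s19 hbot hz hz_top
  have hgrad : (1 / μ) • (y - μ • B y - (v + y)) - -B z = -((1 / μ) • v + (B y - B z)) := by
    rw [smul_sub, smul_sub, smul_add, smul_smul, one_div, inv_mul_cancel₀ hμ, one_smul]
    abel
  rw [hgrad, add_sub_assoc] at hmono
  simp only [inner_neg_left, inner_add_left, inner_add_right, real_inner_smul_left,
    real_inner_self_eq_norm_sq] at hmono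
  rw [real_inner_comm v (y - z), real_inner_comm (B y - B z) v]
  linarith

theorem lyapunov_le_of_cocoercive {β μ d : ℝ} (hμ : 0 < μ) (hμβ : 0 < μ + 4 * β) {v g e : H}
    (hfirst : (1 / (2 * μ)) * d + (1 / μ) * ‖v‖ ^ 2 + ⟪g, e⟫ + ⟪v, g⟫ ≤ 0)
    (hcoco : β * ‖g‖ ^ 2 ≤ ⟪g, e⟫) :
    (1 / (2 * μ)) * d + ((4 * β - μ) / (μ * (μ + 4 * β))) * ‖v‖ ^ 2
      + (1 / 8) * (4 * β - μ) * ‖g‖ ^ 2 ≤ 0 := by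
  set α := (μ + 4 * β) / 4
  have hsq : 0 ≤ ‖v + α • g‖ ^ 2 := sq_nonneg _
  rw [norm_add_sq_real, norm_smul, real_inner_smul_right, mul_pow, Real.norm_eq_abs,
    sq_abs] at hsq
  have hsplit : (1 / (2 * μ)) * d + ((4 * β - μ) / (μ * (μ + 4 * β))) * ‖v‖ ^ 2
      + (1 / 8) * (4 * β - μ) * ‖g‖ ^ 2
      = ((1 / (2 * μ)) * d + (1 / μ) * ‖v‖ ^ 2 + ⟪g, e⟫ + ⟪v, g⟫) - (⟪g, e⟫ - β * ‖g‖ ^ 2)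
        - (2 / (μ + 4 * β)) * (‖v‖ ^ 2 + 2 * (α * ⟪v, g⟫) + α ^ 2 * ‖g‖ ^ 2) := by
    field_simp
    ring
  have hweighted := mul_nonneg (div_nonneg zero_le_two hμβ.le) hsq
  rw [hsplit]
  linarith

theorem nonpos_of_lyapunov_le {β μ d W G : ℝ} (hμ : 0 < μ) (hμβ : μ < 4 * β) (hW : 0 ≤ W)
    (hG : 0 ≤ G) (h : (1 / (2 * μ)) * d + ((4 * β - μ) / (μ * (μ + 4 * β))) * W
      + (1 / 8) * (4 * β - μ) * G ≤ 0) :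
    d ≤ 0 := by
  have hW' : 0 ≤ ((4 * β - μ) / (μ * (μ + 4 * β))) * W :=
    mul_nonneg (div_nonneg (by linarith) (mul_nonneg hμ.le (by linarith))) hW
  have hG' : 0 ≤ (1 / 8) * (4 * β - μ) * G := mul_nonneg (by linarith) hG
  have hd : (1 / (2 * μ)) * d ≤ 0 := by linarith
  exact nonpos_of_mul_nonpos_right hd (by positivity)

theorem antitoneOn_norm_sub_of_inner_nonpos {x x' : ℝ → H} (hderiv : ∀ t, HasDerivAt x (x' t) t)
    (z : H) (hinner : ∀ t, 0 < t → ⟪x t - z, x' t⟫ ≤ 0) :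
    AntitoneOn (fun t => ‖x t - z‖) (Ici 0) := by
  have hsq : ∀ t, HasDerivAt (fun s => ‖x s - z‖ ^ 2) (2 * ⟪x t - z, x' t⟫) t :=
    fun t => ((hderiv t).sub_const z).norm_sq
  have hsq_anti : AntitoneOn (fun t => ‖x t - z‖ ^ 2) (Ici 0) := by
    refine antitoneOn_of_hasDerivWithinAt_nonpos (convex_Ici 0)
      (fun t _ => (hsq t).continuousAt.continuousWithinAt) (fun t _ => (hsq t).hasDerivWithinAt)
      fun t ht => ?_
    rw [interior_Ici] at ht
    linarith [hinner t ht]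
  exact fun a ha b hb hab =>
    (pow_le_pow_iff_left₀ (norm_nonneg _) (norm_nonneg _) two_ne_zero).1 (hsq_anti ha hb hab)

end

theorem proximal_gradient_lyapunov_general
    {H : Type*} [NormedAddCommGroup H] [InnerProductSpace ℝ H]
    (Φ : H → EReal)
    (hproper : (∀ x, Φ x ≠ ⊥) ∧ ∃ x, Φ x ≠ ⊤)
    (β : ℝ) (B : H → H)
    (hcoco : ∀ x y : H, β * ‖B x - B y‖ ^ 2 ≤ ⟪B x - B y, x - y⟫)
    (μ : ℝ) (hμ0 : 0 < μ) (hμβ : μ < 4 * β)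
    (prox : H → H)
    (hprox : ∀ w : H, InSubdiff Φ (prox w) ((1 / μ) • (w - prox w)))
    (x x' : ℝ → H)
    (hderiv : ∀ t : ℝ, HasDerivAt x (x' t) t)
    (heq : ∀ t : ℝ, 0 ≤ t → x' t + x t - prox (x t - μ • B (x t)) = 0)
    (z : H) (hz : InSubdiff Φ z (-B z)) :
    (∀ t : ℝ, 0 ≤ t → ∀ d : ℝ,
      HasDerivAt (fun s => ‖x s - z‖ ^ 2) d t →
        (0 ≥ (1 / (2 * μ)) * d + (1 / μ) * ‖x' t‖ ^ 2
            + ⟪B (x t) - B z, x t - z⟫ + ⟪x' t, B (x t) - B z⟫) ∧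
        ((1 / (2 * μ)) * d + ((4 * β - μ) / (μ * (μ + 4 * β))) * ‖x' t‖ ^ 2
            + (1 / 8) * (4 * β - μ) * ‖B (x t) - B z‖ ^ 2 ≤ 0)) ∧
      AntitoneOn (fun t => ‖x t - z‖) (Ici (0 : ℝ)) := by
  obtain ⟨hbot, y₀, hy₀⟩ := hproper
  have hμβ' : 0 < μ + 4 * β := by linarith
  have hz_top : Φ z ≠ ⊤ := hz.ne_top_s19 hy₀
  have hlyap : ∀ t, 0 ≤ t → ∀ d, HasDerivAt (fun s => ‖x s - z‖ ^ 2) d t →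
      (0 ≥ (1 / (2 * μ)) * d + (1 / μ) * ‖x' t‖ ^ 2
          + ⟪B (x t) - B z, x t - z⟫ + ⟪x' t, B (x t) - B z⟫) ∧
      ((1 / (2 * μ)) * d + ((4 * β - μ) / (μ * (μ + 4 * β))) * ‖x' t‖ ^ 2
          + (1 / 8) * (4 * β - μ) * ‖B (x t) - B z‖ ^ 2 ≤ 0) := by
    intro t ht d hd
    have hd_eq : (1 / (2 * μ)) * d = (1 / μ) * ⟪x t - z, x' t⟫ := by
      rw [hd.unique ((hderiv t).sub_const z).norm_sq]
      field_simp
    have hstep := hprox (x t - μ • B (x t))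
    rw [← sub_eq_zero.mp (heq t ht)] at hstep
    have hfirst := forward_backward_step_le hbot hμ0.ne' hstep hz hz_top
    rw [← hd_eq] at hfirst
    exact ⟨hfirst, lyapunov_le_of_cocoercive hμ0 hμβ' hfirst (hcoco (x t) z)⟩
  refine ⟨hlyap, antitoneOn_norm_sub_of_inner_nonpos hderiv z fun t ht => ?_⟩
  have hd := ((hderiv t).sub_const z).norm_sq
  linarith [nonpos_of_lyapunov_le hμ0 hμβ (sq_nonneg ‖x' t‖) (sq_nonneg ‖B (x t) - B z‖)
    (hlyap t ht.le _ hd).2]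

/-- Lyapunov inequalities for the proximal-gradient dynamic: for any solution
`z` of `0 ∈ ∂Φ(z) + Bz` and any `t ≥ 0`, writing `d` for the derivative of
`‖x(·) - z‖²` at `t`, one has
`0 ≥ (1/(2μ)) d + (1/μ)‖ẋ‖² + ⟨Bx - Bz, x - z⟩ + ⟨ẋ, Bx - Bz⟩` and
`(1/(2μ)) d + ((4β-μ)/(μ(μ+4β)))‖ẋ‖² + (1/8)(4β-μ)‖Bx - Bz‖² ≤ 0`;
consequently `t ↦ ‖x(t) - z‖` is nonincreasing on `[0, ∞)`. -/
theorem proximal_gradient_lyapunov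
    {H : Type*} [NormedAddCommGroup H] [InnerProductSpace ℝ H] [CompleteSpace H]
    (Φ : H → EReal)
    (hproper : (∀ x, Φ x ≠ ⊥) ∧ ∃ x, Φ x ≠ ⊤)
    (hconvex : ∀ x y : H, ∀ a b : ℝ, 0 ≤ a → 0 ≤ b → a + b = 1 →
      Φ (a • x + b • y) ≤ (a : EReal) * Φ x + (b : EReal) * Φ y)
    (hlsc : LowerSemicontinuous Φ)
    (β : ℝ) (hβ : 0 < β) (B : H → H)
    (hcoco : ∀ x y : H, β * ‖B x - B y‖ ^ 2 ≤ ⟪B x - B y, x - y⟫)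
    (μ : ℝ) (hμ0 : 0 < μ) (hμβ : μ < 4 * β)
    (prox : H → H)
    (hprox : ∀ w : H, InSubdiff Φ (prox w) ((1 / μ) • (w - prox w)))
    (x x' : ℝ → H)
    (hderiv : ∀ t : ℝ, HasDerivAt x (x' t) t)
    (heq : ∀ t : ℝ, 0 ≤ t → x' t + x t - prox (x t - μ • B (x t)) = 0)
    (z : H) (hz : InSubdiff Φ z (-B z)) :
    (∀ t : ℝ, 0 ≤ t → ∀ d : ℝ,
      HasDerivAt (fun s => ‖x s - z‖ ^ 2) d t →
        (0 ≥ (1 / (2 * μ)) * d + (1 / μ) * ‖x' t‖ ^ 2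
            + ⟪B (x t) - B z, x t - z⟫ + ⟪x' t, B (x t) - B z⟫) ∧
        ((1 / (2 * μ)) * d + ((4 * β - μ) / (μ * (μ + 4 * β))) * ‖x' t‖ ^ 2
            + (1 / 8) * (4 * β - μ) * ‖B (x t) - B z‖ ^ 2 ≤ 0)) ∧
      AntitoneOn (fun t => ‖x t - z‖) (Ici (0 : ℝ)) :=
  proximal_gradient_lyapunov_general Φ hproper β B hcoco μ hμ0 hμβ prox hprox x x' hderiv heq z hz
end
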